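/- Consider the hard instance graph G with stream π and maximal matching M, and let M' ⊆ M be an arbitrary (fixed) subset. Let S_L be the output of Greedy_d on the substream of π consisting of the edges of E_L between A(M') and B_out (with degree bound 1 on A(M') and degree bound d on B_out). Then: (i) for all indices i < j such that both a_in^i and a_in^j are endpoints of edges of M', if a_in^i is an endpoint of an edge of S_L then so is a_in^j; and (ii) for all indices j < i, if deg_{S_L}(b_out^i) ≥ 1 then deg_{S_L}(b_out^j) = d. -/

import Mathlib

open MeasureTheory

variable {α β : Type*} [DecidableEq α] [DecidableEq β]

def IsMatching (M : Finset (α × β)) : Prop :=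
  ∀ e ∈ M, ∀ f ∈ M, e ≠ f → e.1 ≠ f.1 ∧ e.2 ≠ f.2

instance (M : Finset (α × β)) : Decidable (IsMatching M) := by
  unfold IsMatching; exact inferInstance

def matchingNumber (E : Finset (α × β)) : ℕ :=
  (E.powerset.filter fun M => IsMatching M).sup Finset.card

def degA (S : Finset (α × β)) (a : α) : ℕ := (S.filter fun e => e.1 = a).card

def degB (S : Finset (α × β)) (b : β) : ℕ := (S.filter fun e => e.2 = b).card

def greedyStep (d : ℕ) (S : Finset (α × β)) (e : α × β) : Finset (α × β) :=
  if degA S e.1 = 0 ∧ degB S e.2 < d then insert e S else S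

def greedyD (d : ℕ) (π : List (α × β)) : Finset (α × β) :=
  π.foldl (greedyStep d) ∅

/-- Vertices of the hard instance: `Sum.inl i` is the "in" vertex of index `i`
and `Sum.inr i` is the "out" vertex of index `i` (on each side). -/
abbrev HV (N : ℕ) := Fin N ⊕ Fin N

/-- The perfect matching `M = {a_in^i b_in^i}` of the hard instance. -/
def hardM (N : ℕ) : List (HV N × HV N) :=
  (List.finRange N).map fun i => (Sum.inl i, Sum.inl i)

/-- The edges `E_L = {a_in^i b_out^j : i ≥ j}`, streamed with `i` decreasing and,
for fixed `i`, `j` increasing. -/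
def hardEL (N : ℕ) : List (HV N × HV N) :=
  ((List.finRange N).reverse).flatMap fun i =>
    ((List.finRange N).filter fun j => decide (j ≤ i)).map fun j =>
      (Sum.inl i, Sum.inr j)

/-- The edges `E_R = {a_out^i b_in^j : i ≥ j}`, streamed analogously. -/
def hardER (N : ℕ) : List (HV N × HV N) :=
  ((List.finRange N).reverse).flatMap fun i =>
    ((List.finRange N).filter fun j => decide (j ≤ i)).map fun j =>
      (Sum.inr i, Sum.inl j)

/-- The stream `π` of the hard instance: first `M`, then `E_L`, then `E_R`. -/
def hardStream (N : ℕ) : List (HV N × HV N) := hardM N ++ hardEL N ++ hardER N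

/-! Greedy is maximal at every moment: once an edge `e` has been processed, its `A`-endpoint
is matched or its `B`-endpoint is saturated, and both states persist since degrees only grow.
So if an output edge `f` is streamed after `e`, then when `e` was processed `f.1` was still free
and `f.2` unsaturated: a shared `A`-endpoint forces `e.2` to be saturated, and a shared
`B`-endpoint forces `e.1` to be matched. -/

section Greedy

variable {d : ℕ}

theorem degA_mono {α β : Type*} [DecidableEq α] {S S' : Finset (α × β)} (h : S ⊆ S') (a : α) :
    degA S a ≤ degA S' a :=
  Finset.card_le_card (Finset.filter_subset_filter _ h)

theorem degB_mono {α β : Type*} [DecidableEq β] {S S' : Finset (α × β)} (h : S ⊆ S') (b : β) :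
    degB S b ≤ degB S' b :=
  Finset.card_le_card (Finset.filter_subset_filter _ h)

theorem degA_ne_zero_iff_mem_image_fst {α β : Type*} [DecidableEq α] {S : Finset (α × β)}
    {a : α} : degA S a ≠ 0 ↔ a ∈ S.image Prod.fst := by
  simp [degA, Finset.filter_eq_empty_iff]

theorem one_le_degB_iff {α β : Type*} [DecidableEq β] {S : Finset (α × β)} {b : β} :
    1 ≤ degB S b ↔ ∃ e ∈ S, e.2 = b := by
  simp [degB, Finset.one_le_card, Finset.filter_nonempty_iff]

theorem subset_foldl_greedyStep (l : List (α × β)) (S : Finset (α × β)) :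
    S ⊆ l.foldl (greedyStep d) S := by
  induction l generalizing S with
  | nil => exact subset_rfl
  | cons e l ih =>
    refine subset_trans ?_ (ih _)
    unfold greedyStep
    split_ifs
    exacts [Finset.subset_insert _ _, subset_rfl]

theorem degB_foldl_greedyStep_le (l : List (α × β)) {S : Finset (α × β)}
    (hS : ∀ b, degB S b ≤ d) (b : β) : degB (l.foldl (greedyStep d) S) b ≤ d := by
  induction l generalizing S with
  | nil => exact hS b
  | cons e l ih =>
    refine ih fun b => ?_
    unfold greedyStep degB
    split_ifs with h
    · rw [Finset.filter_insert]
      split_ifs with he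
      · exact (Finset.card_insert_le _ _).trans (he ▸ h.2)
      · exact hS b
    · exact hS b

theorem degB_greedyD_le (l : List (α × β)) (b : β) : degB (greedyD d l) b ≤ d :=
  degB_foldl_greedyStep_le l (by simp [degB]) b

theorem mem_foldl_greedyStep {l : List (α × β)} {S : Finset (α × β)} {e : α × β}
    (he : e ∈ l.foldl (greedyStep d) S) :
    e ∈ S ∨ e ∈ l ∧ degA S e.1 = 0 ∧ degB S e.2 < d := by
  induction l generalizing S with
  | nil => exact Or.inl he
  | cons x l ih =>
    have hsub := subset_foldl_greedyStep (d := d) [x] S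
    rcases ih he with he | ⟨hl, hA, hB⟩
    · unfold greedyStep at he
      split_ifs at he with hx
      · rcases Finset.mem_insert.1 he with rfl | he
        exacts [Or.inr ⟨List.mem_cons_self, hx⟩, Or.inl he]
      · exact Or.inl he
    · exact Or.inr ⟨List.mem_cons_of_mem x hl,
        Nat.eq_zero_of_le_zero (hA ▸ degA_mono hsub _), (degB_mono hsub _).trans_lt hB⟩

theorem mem_of_mem_greedyD {l : List (α × β)} {e : α × β} (he : e ∈ greedyD d l) : e ∈ l :=
  ((mem_foldl_greedyStep he).resolve_left (Finset.notMem_empty e)).1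

theorem degA_ne_zero_or_le_degB_foldl_greedyStep {l : List (α × β)} {e : α × β} (he : e ∈ l)
    (S : Finset (α × β)) :
    degA (l.foldl (greedyStep d) S) e.1 ≠ 0 ∨ d ≤ degB (l.foldl (greedyStep d) S) e.2 := by
  induction l generalizing S with
  | nil => simp at he
  | cons x l ih =>
    rcases List.mem_cons.1 he with rfl | he
    · have hsub := subset_foldl_greedyStep (d := d) l (greedyStep d S e)
      have hstep : degA (greedyStep d S e) e.1 ≠ 0 ∨ d ≤ degB (greedyStep d S e) e.2 := by
        unfold greedyStep
        split_ifs with h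
        · exact Or.inl (degA_ne_zero_iff_mem_image_fst.2
            (Finset.mem_image_of_mem _ (Finset.mem_insert_self e S)))
        · omega
      rcases hstep with h | h
      · exact Or.inl fun h0 => h (Nat.eq_zero_of_le_zero (h0 ▸ degA_mono hsub _))
      · exact Or.inr (h.trans (degB_mono hsub _))
    · exact ih he _

theorem List.Pairwise.exists_eq_append_cons_notMem {γ : Type*} {r : γ → γ → Prop}
    [Std.Asymm r] {l : List γ} (hl : l.Pairwise r) {x y : γ} (hx : x ∈ l) (hxy : r x y) :
    ∃ p q, l = p ++ x :: q ∧ y ∉ p ++ [x] := by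
  obtain ⟨p, q, rfl⟩ := List.append_of_mem hx
  refine ⟨p, q, rfl, fun hy => ?_⟩
  rcases List.mem_append.1 hy with hy | hy
  · exact Std.Asymm.asymm _ _ hxy (hl.rel_of_mem_append hy List.mem_cons_self)
  · exact Std.Asymm.asymm _ _ hxy (List.eq_of_mem_singleton hy ▸ hxy)

theorem exists_subset_greedyD_of_rel {r : α × β → α × β → Prop} [Std.Asymm r]
    {l : List (α × β)} (hl : l.Pairwise r) {e f : α × β} (he : e ∈ l) (hf : f ∈ greedyD d l)
    (hef : r e f) :
    ∃ S ⊆ greedyD d l, degA S f.1 = 0 ∧ degB S f.2 < d ∧ (degA S e.1 ≠ 0 ∨ d ≤ degB S e.2) := by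
  obtain ⟨p, q, rfl, hfe⟩ := hl.exists_eq_append_cons_notMem he hef
  have hsplit : greedyD d (p ++ e :: q) = q.foldl (greedyStep d) (greedyD d (p ++ [e])) := by
    simp [greedyD]
  rw [hsplit] at hf ⊢
  rcases mem_foldl_greedyStep hf with hf | ⟨-, hA, hB⟩
  · exact absurd (mem_of_mem_greedyD hf) hfe
  · exact ⟨_, subset_foldl_greedyStep q _, hA, hB,
      degA_ne_zero_or_le_degB_foldl_greedyStep (by simp) ∅⟩

theorem degB_greedyD_eq_of_rel {r : α × β → α × β → Prop} [Std.Asymm r]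
    {l : List (α × β)} (hl : l.Pairwise r) {e f : α × β} (he : e ∈ l) (hf : f ∈ greedyD d l)
    (hef : r e f) (h : f.1 = e.1) : degB (greedyD d l) e.2 = d := by
  obtain ⟨S, hS, hA, -, hblocked⟩ := exists_subset_greedyD_of_rel hl he hf hef
  rw [h] at hA
  exact le_antisymm (degB_greedyD_le l _) ((hblocked.resolve_left (· hA)).trans (degB_mono hS _))

theorem mem_image_fst_greedyD_of_rel {r : α × β → α × β → Prop} [Std.Asymm r]
    {l : List (α × β)} (hl : l.Pairwise r) {e f : α × β} (he : e ∈ l) (hf : f ∈ greedyD d l)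
    (hef : r e f) (h : f.2 = e.2) : e.1 ∈ (greedyD d l).image Prod.fst := by
  obtain ⟨S, hS, -, hB, hblocked⟩ := exists_subset_greedyD_of_rel hl he hf hef
  rw [h] at hB
  rw [← degA_ne_zero_iff_mem_image_fst]
  exact fun h0 => hblocked.resolve_right (by omega) (Nat.eq_zero_of_le_zero (h0 ▸ degA_mono hS _))

end Greedy

section HardInstance

variable {N : ℕ}

def hardPrecedes : HV N × HV N → HV N × HV N → Prop
  | (.inl i, .inr j), (.inl i', .inr j') => i' < i ∨ i = i' ∧ j < j'
  | _, _ => False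

instance : Std.Asymm (hardPrecedes (N := N)) where
  asymm := by
    rintro ⟨_ | i, _ | j⟩ ⟨_ | i', _ | j'⟩ <;> simp only [hardPrecedes, not_false_eq_true,
      false_imp_iff]
    omega

theorem mem_hardEL {e : HV N × HV N} :
    e ∈ hardEL N ↔ ∃ i j : Fin N, j ≤ i ∧ e = (.inl i, .inr j) := by
  simp [hardEL, eq_comm]

theorem pairwise_hardPrecedes_hardEL : (hardEL N).Pairwise hardPrecedes := by
  rw [hardEL, List.pairwise_flatMap, List.pairwise_reverse]
  refine ⟨fun i _ => ?_, (List.pairwise_lt_finRange N).imp fun hlt x hx y hy => ?_⟩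
  · rw [List.pairwise_map]
    exact ((List.pairwise_lt_finRange N).filter _).imp fun h => Or.inr ⟨rfl, h⟩
  · simp only [List.mem_map, List.mem_filter] at hx hy
    obtain ⟨j, -, rfl⟩ := hx
    obtain ⟨j', -, rfl⟩ := hy
    exact Or.inl hlt

theorem hardStream_filter_eq (T : Finset (HV N)) :
    (hardStream N).filter (fun e => decide (e.1 ∈ T) && e.2.isRight) =
      (hardEL N).filter (fun e => decide (e.1 ∈ T)) := by
  have hM : (hardM N).filter (fun e => decide (e.1 ∈ T) && e.2.isRight) = [] := by
    simp [hardM]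
  have hR : (hardER N).filter (fun e => decide (e.1 ∈ T) && e.2.isRight) = [] := by
    simp [hardER]
  rw [hardStream, List.filter_append, List.filter_append, hM, hR, List.nil_append,
    List.append_nil]
  refine List.filter_congr fun e he => ?_
  obtain ⟨i, j, -, rfl⟩ := mem_hardEL.1 he
  simp

theorem mem_hardEL_filter {T : Finset (HV N)} {e : HV N × HV N} :
    e ∈ (hardEL N).filter (fun e => decide (e.1 ∈ T)) ↔
      ∃ i j : Fin N, j ≤ i ∧ .inl i ∈ T ∧ e = (.inl i, .inr j) := by
  rw [List.mem_filter, mem_hardEL]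
  constructor
  · rintro ⟨⟨i, j, hji, rfl⟩, hT⟩
    exact ⟨i, j, hji, of_decide_eq_true hT, rfl⟩
  · rintro ⟨i, j, hji, hT, rfl⟩
    exact ⟨⟨i, j, hji, rfl⟩, decide_eq_true hT⟩

end HardInstance

theorem hard_instance_greedy_monotone_general (N d : ℕ)
    (M' : Finset (HV N × HV N)) :
    ∀ SL : Finset (HV N × HV N),
      SL = greedyD d ((hardStream N).filter fun e =>
        decide (e.1 ∈ M'.image Prod.fst) && e.2.isRight) →
      ((∀ i j : Fin N, i < j →
          Sum.inl i ∈ M'.image Prod.fst → Sum.inl j ∈ M'.image Prod.fst →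
          Sum.inl i ∈ SL.image Prod.fst → Sum.inl j ∈ SL.image Prod.fst) ∧
       (∀ j i : Fin N, j < i →
          1 ≤ degB SL (Sum.inr i) → degB SL (Sum.inr j) = d)) := by
  rintro SL rfl
  rw [hardStream_filter_eq]
  set L := (hardEL N).filter fun e => decide (e.1 ∈ M'.image Prod.fst)
  have hpw : L.Pairwise hardPrecedes := pairwise_hardPrecedes_hardEL.filter _
  have hout := fun f (hf : f ∈ greedyD d L) => mem_hardEL_filter.1 (mem_of_mem_greedyD hf)
  refine ⟨fun i j hij _ hjT hiS => ?_, fun j i hji h1 => ?_⟩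
  · obtain ⟨f, hf, hfi⟩ := Finset.mem_image.1 hiS
    obtain ⟨i', k, hki, -, rfl⟩ := hout f hf
    obtain rfl : i' = i := Sum.inl_injective hfi
    -- `a_in^j` was offered `b_out^k` before `a_in^i` took it
    exact mem_image_fst_greedyD_of_rel hpw (mem_hardEL_filter.2 ⟨j, k, hki.trans hij.le, hjT, rfl⟩)
      hf (Or.inl hij) rfl
  · obtain ⟨f, hf, hfi⟩ := one_le_degB_iff.1 h1
    obtain ⟨k, i', hik, hkT, rfl⟩ := hout f hf
    obtain rfl : i' = i := Sum.inr_injective hfi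
    -- `a_in^k` was offered `b_out^j` before it took `b_out^i`
    exact degB_greedyD_eq_of_rel hpw (mem_hardEL_filter.2 ⟨k, j, (hji.trans_le hik).le, hkT, rfl⟩)
      hf (Or.inr ⟨rfl, hji⟩) rfl

/-- The key structural claim in the proof of Theorem 4.5: for any fixed subset
`M' ⊆ M`, letting `S_L` be the output of `Greedy_d` on the substream of `π`
consisting of the `E_L`-edges between `A(M')` and `B_out`,
(i) the `A(M')`-vertices are matched in `S_L` from the largest index downwards:
if `i < j`, both `a_in^i` and `a_in^j` are `M'`-endpoints, and `a_in^i` is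
matched in `S_L`, then so is `a_in^j`; and
(ii) the `B_out`-vertices are saturated from the smallest index upwards: if
`j < i` and `deg_{S_L}(b_out^i) ≥ 1` then `deg_{S_L}(b_out^j) = d`. -/
theorem hard_instance_greedy_monotone (N d : ℕ) (hd : 1 ≤ d)
    (M' : Finset (HV N × HV N)) (hM' : M' ⊆ (hardM N).toFinset) :
    ∀ SL : Finset (HV N × HV N),
      SL = greedyD d ((hardStream N).filter fun e =>
        decide (e.1 ∈ M'.image Prod.fst) && e.2.isRight) →
      ((∀ i j : Fin N, i < j →
          Sum.inl i ∈ M'.image Prod.fst → Sum.inl j ∈ M'.image Prod.fst →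
          Sum.inl i ∈ SL.image Prod.fst → Sum.inl j ∈ SL.image Prod.fst) ∧
       (∀ j i : Fin N, j < i →
          1 ≤ degB SL (Sum.inr i) → degB SL (Sum.inr j) = d)) :=
  hard_instance_greedy_monotone_general N d M'
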